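/- arXiv:2307.06643 — 9 statements merged into one kernel-verified Lean document; each statement's English description precedes it below -/
import Mathlib

section
/- Let (Ω, P) be a probability space, let D : Ω → ℕ be measurable with D and D² integrable (as real-valued functions), and let X : Ω → ℝ with X and X² integrable. Let f, φ ∈ ℝ and suppose that for every k ∈ ℕ: (i) the set integral of X over the event {D = k} equals k·f·P(D = k), and (ii) the set integral of X² over {D = k} equals (k·f + (k² − k)·φ·f)·P(D = k). Set μ_D = E[D] and σ_D² = E[D²] − μ_D². Then Var(X) = f·(μ_D²·(φ − f) + μ_D·(1 − φ) + σ_D²·φ). -/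
/-!
On each event `{D = k}`, the hypotheses give `X` and `X²` the same integrals as `f D` and
`f D + φ f (D² - D)`, i.e. these are their conditional expectations given `D`.
Summing over the countable partition `{D = k}` gives `E[X] = f μ_D` and
`E[X²] = f μ_D + φ f (E[D²] - μ_D)`, and the variance formula is then algebra.
-/

open MeasureTheory

section Fiber

variable {Ω ι E : Type*} [MeasurableSpace Ω] {P : Measure Ω}
  [MeasurableSpace ι] [MeasurableSingletonClass ι] {D : Ω → ι}
  [NormedAddCommGroup E] [NormedSpace ℝ E]

theorem hasSum_setIntegral_fiber [Countable ι] (hD : Measurable D) {g : Ω → E}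
    (hg : Integrable g P) :
    HasSum (fun k => ∫ ω in {ω | D ω = k}, g ω ∂P) (∫ ω, g ω ∂P) := by
  have hmeas : ∀ k, MeasurableSet {ω | D ω = k} := fun k => hD (measurableSet_singleton k)
  have hunion : (⋃ k, {ω | D ω = k}) = Set.univ := by
    ext ω
    simp
  have hdisj : Pairwise (Function.onFun Disjoint fun k => {ω | D ω = k}) :=
    fun i j hij => Set.disjoint_left.mpr fun ω hi hj => hij (hi.symm.trans hj)
  simpa only [hunion, setIntegral_univ] using
    hasSum_integral_iUnion hmeas hdisj (by rw [hunion]; exact hg.integrableOn)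

theorem setIntegral_fiber_comp [CompleteSpace E] (hD : Measurable D) (h : ι → E) (k : ι) :
    ∫ ω in {ω | D ω = k}, h (D ω) ∂P = P.real {ω | D ω = k} • h k := by
  have hk : MeasurableSet {ω | D ω = k} := hD (measurableSet_singleton k)
  rw [setIntegral_congr_fun hk (g := fun _ => h k) fun ω hω => congrArg h hω, setIntegral_const]

theorem integral_eq_integral_comp_of_setIntegral_fiber [Countable ι] [CompleteSpace E]
    (hD : Measurable D) {g : Ω → E} (hg : Integrable g P) {h : ι → E}
    (hh : Integrable (fun ω => h (D ω)) P)
    (hfiber : ∀ k, ∫ ω in {ω | D ω = k}, g ω ∂P = P.real {ω | D ω = k} • h k) :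
    ∫ ω, g ω ∂P = ∫ ω, h (D ω) ∂P := by
  have hsum := hasSum_setIntegral_fiber hD hh
  simp only [setIntegral_fiber_comp hD, ← hfiber] at hsum
  exact (hasSum_setIntegral_fiber hD hg).unique hsum

end Fiber

theorem variance_indirect_response_general
    {Ω : Type*} [MeasurableSpace Ω] (P : Measure Ω)
    (D : Ω → ℕ) (hD : Measurable D)
    (hDint : Integrable (fun ω => (D ω : ℝ)) P)
    (hD2int : Integrable (fun ω => (D ω : ℝ) ^ 2) P)
    (X : Ω → ℝ) (hX : Integrable X P) (hX2 : Integrable (fun ω => X ω ^ 2) P)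
    (f φ : ℝ)
    (h1 : ∀ k : ℕ, ∫ ω in {ω | D ω = k}, X ω ∂P
          = (k : ℝ) * f * (P {ω | D ω = k}).toReal)
    (h2 : ∀ k : ℕ, ∫ ω in {ω | D ω = k}, X ω ^ 2 ∂P
          = ((k : ℝ) * f + ((k : ℝ) ^ 2 - (k : ℝ)) * φ * f) * (P {ω | D ω = k}).toReal)
    (μD σD2 : ℝ)
    (hμ : μD = ∫ ω, (D ω : ℝ) ∂P)
    (hσ : σD2 = (∫ ω, (D ω : ℝ) ^ 2 ∂P) - μD ^ 2) :
    (∫ ω, X ω ^ 2 ∂P) - (∫ ω, X ω ∂P) ^ 2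
      = f * (μD ^ 2 * (φ - f) + μD * (1 - φ) + σD2 * φ) := by
  have hEX : ∫ ω, X ω ∂P = μD * f := by
    rw [integral_eq_integral_comp_of_setIntegral_fiber hD hX (hDint.mul_const f)
      fun k => by rw [h1, smul_eq_mul, mul_comm, measureReal_def],
      integral_mul_const, hμ]
  have hEX2 : ∫ ω, X ω ^ 2 ∂P = μD * f + (σD2 + μD ^ 2 - μD) * (φ * f) := by
    have hsq : Integrable (fun ω => (D ω : ℝ) ^ 2 - D ω) P := hD2int.sub hDint
    have hlin := (hDint.mul_const f).add (hsq.mul_const (φ * f))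
    rw [integral_eq_integral_comp_of_setIntegral_fiber hD hX2
        (h := fun k : ℕ => (k : ℝ) * f + ((k : ℝ) ^ 2 - k) * (φ * f)) hlin
        fun k => by rw [h2, smul_eq_mul, mul_comm, measureReal_def, mul_assoc _ φ],
      integral_add (hDint.mul_const f) (hsq.mul_const (φ * f)),
      integral_mul_const, integral_mul_const, integral_sub hD2int hDint, hσ, hμ]
    ring
  rw [hEX, hEX2]
  ring

/-- Paper Lemma 2 (variance formula):
`Var(X) = f·(μ_D²·(φ − f) + μ_D·(1 − φ) + σ_D²·φ)`. -/
theorem variance_indirect_response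
    {Ω : Type*} [MeasurableSpace Ω] (P : Measure Ω) [IsProbabilityMeasure P]
    (D : Ω → ℕ) (hD : Measurable D)
    (hDint : Integrable (fun ω => (D ω : ℝ)) P)
    (hD2int : Integrable (fun ω => (D ω : ℝ) ^ 2) P)
    (X : Ω → ℝ) (hX : Integrable X P) (hX2 : Integrable (fun ω => X ω ^ 2) P)
    (f φ : ℝ)
    (h1 : ∀ k : ℕ, ∫ ω in {ω | D ω = k}, X ω ∂P
          = (k : ℝ) * f * (P {ω | D ω = k}).toReal)
    (h2 : ∀ k : ℕ, ∫ ω in {ω | D ω = k}, X ω ^ 2 ∂P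
          = ((k : ℝ) * f + ((k : ℝ) ^ 2 - (k : ℝ)) * φ * f) * (P {ω | D ω = k}).toReal)
    (μD σD2 : ℝ)
    (hμ : μD = ∫ ω, (D ω : ℝ) ∂P)
    (hσ : σD2 = (∫ ω, (D ω : ℝ) ^ 2 ∂P) - μD ^ 2) :
    (∫ ω, X ω ^ 2 ∂P) - (∫ ω, X ω ∂P) ^ 2
      = f * (μD ^ 2 * (φ - f) + μD * (1 - φ) + σD2 * φ) :=
  variance_indirect_response_general P D hD hDint hD2int X hX hX2 f φ h1 h2 μD σD2 hμ hσ
end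

section
/- Let f, φ, μ, s ∈ ℝ with 0 < f < 1, 0 < φ ≤ 1, μ ≥ 1, s ≥ 0, and let n ≥ 1 be a natural number. Define σ_X² = f·(μ²·(φ − f) + μ·(1 − φ) + s·φ) and σ_Y² = f·(1 − f), and assume σ_X² ≥ 0. If s ≤ μ·(μ − 1)·(1 − φ)/φ, then for every λ > 0: N(μ·f, σ_X²/n)({x ∈ ℝ : |x/μ − f| > λ}) ≤ N(f, σ_Y²/n)({y ∈ ℝ : |y − f| > λ}). -/
/-!
Dividing by `μ` turns the indirect estimate `N(μ f, σ_X²/n)` into `N(f, σ_X²/(μ² n))`, so both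
probabilities are two-sided tails of Gaussians centred at `f`. Such a tail grows with the variance,
because `N(m, v)` is the image of `N(0, 1)` under `x ↦ √v x + m`. It remains to compare variances:
`μ² σ_Y² - σ_X² = f ((1 - φ) μ (μ - 1) - s φ)`, which is nonnegative exactly under the bound on `s`.
-/

open MeasureTheory ProbabilityTheory
open scoped NNReal

lemma gaussianReal_eq_map_standard (m : ℝ) (v : ℝ≥0) :
    gaussianReal m v = (gaussianReal 0 1).map (fun x => √v * x + m) := by
  rw [show (fun x => √v * x + m) = (· + m) ∘ (√v * ·) from rfl,
    ← Measure.map_map (by fun_prop) (by fun_prop), gaussianReal_map_const_mul,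
    gaussianReal_map_add_const, mul_zero, zero_add]
  congr
  ext
  simp

lemma gaussianReal_abs_sub_gt (m lam : ℝ) (v : ℝ≥0) :
    gaussianReal m v {y | lam < |y - m|} = gaussianReal 0 1 {x | lam < √v * |x|} := by
  rw [gaussianReal_eq_map_standard,
    Measure.map_apply (by fun_prop) (measurableSet_lt measurable_const (by fun_prop))]
  congr 1 with x
  simp [abs_mul, abs_of_nonneg (Real.sqrt_nonneg v)]

lemma gaussianReal_abs_sub_gt_mono (m lam : ℝ) {v w : ℝ≥0} (hvw : v ≤ w) :
    gaussianReal m v {y | lam < |y - m|} ≤ gaussianReal m w {y | lam < |y - m|} := by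
  rw [gaussianReal_abs_sub_gt, gaussianReal_abs_sub_gt]
  refine measure_mono fun x (hx : lam < √v * |x|) => hx.trans_le ?_
  gcongr

lemma gaussianReal_abs_div_sub_gt (m lam : ℝ) {c : ℝ} (hc : c ≠ 0) (v : ℝ) :
    gaussianReal (c * m) v.toNNReal {x | lam < |x / c - m|} =
      gaussianReal m (v / c ^ 2).toNNReal {y | lam < |y - m|} := by
  have hS : MeasurableSet {y : ℝ | lam < |y - m|} :=
    measurableSet_lt measurable_const (by fun_prop)
  change gaussianReal _ _ ((· / c) ⁻¹' {y | lam < |y - m|}) = _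
  rw [← Measure.map_apply (by fun_prop) hS, gaussianReal_map_div_const,
    mul_div_cancel_left₀ m hc, Real.toNNReal_div' (sq_nonneg c)]
  congr
  simp [sq_nonneg]

lemma indirect_variance_le_sq_mul_direct_variance (f φ μ s : ℝ) (hf : 0 ≤ f) (hφ : 0 < φ)
    (hs : s ≤ μ * (μ - 1) * (1 - φ) / φ) :
    f * (μ ^ 2 * (φ - f) + μ * (1 - φ) + s * φ) ≤ μ ^ 2 * (f * (1 - f)) := by
  have hsφ : s * φ ≤ μ * (μ - 1) * (1 - φ) := (le_div_iff₀ hφ).1 hs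
  nlinarith [mul_le_mul_of_nonneg_left hsφ hf]

theorem indirect_better_than_direct_general (f φ μ s : ℝ)
    (hf0 : 0 < f) (hφ0 : 0 < φ)
    (hμ : 1 ≤ μ) (n : ℕ)
    (σX2 σY2 : ℝ)
    (hσX : σX2 = f * (μ ^ 2 * (φ - f) + μ * (1 - φ) + s * φ))
    (hσY : σY2 = f * (1 - f))
    (hcond : s ≤ μ * (μ - 1) * (1 - φ) / φ) :
    ∀ lam : ℝ, 0 < lam →
      gaussianReal (μ * f) ((σX2 / n).toNNReal) {x : ℝ | |x / μ - f| > lam} ≤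
      gaussianReal f ((σY2 / n).toNNReal) {y : ℝ | |y - f| > lam} := by
  intro lam _
  have hμ0 : 0 < μ := by linarith
  have hσ : σX2 / μ ^ 2 ≤ σY2 := by
    rw [div_le_iff₀ (by positivity), mul_comm, hσX, hσY]
    exact indirect_variance_le_sq_mul_direct_variance f φ μ s hf0.le hφ0 hcond
  have hσn : σX2 / n / μ ^ 2 ≤ σY2 / n := by
    rw [div_right_comm]
    gcongr
  exact (gaussianReal_abs_div_sub_gt f lam hμ0.ne' _).trans_le
    (gaussianReal_abs_sub_gt_mono f lam (Real.toNNReal_le_toNNReal hσn))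

/-- Paper Theorem 2: within the bound on degree variance, the (Gaussian
approximation of the) indirect-survey estimate deviates from `f` with lower
probability than the direct-survey estimate. -/
theorem indirect_better_than_direct (f φ μ s : ℝ)
    (hf0 : 0 < f) (hf1 : f < 1) (hφ0 : 0 < φ) (hφ1 : φ ≤ 1)
    (hμ : 1 ≤ μ) (hs : 0 ≤ s) (n : ℕ) (hn : 1 ≤ n)
    (σX2 σY2 : ℝ)
    (hσX : σX2 = f * (μ ^ 2 * (φ - f) + μ * (1 - φ) + s * φ))
    (hσY : σY2 = f * (1 - f))
    (hσX0 : 0 ≤ σX2)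
    (hcond : s ≤ μ * (μ - 1) * (1 - φ) / φ) :
    ∀ lam : ℝ, 0 < lam →
      gaussianReal (μ * f) ((σX2 / n).toNNReal) {x : ℝ | |x / μ - f| > lam} ≤
      gaussianReal f ((σY2 / n).toNNReal) {y : ℝ | |y - f| > lam} :=
  indirect_better_than_direct_general f φ μ s hf0 hφ0 hμ n σX2 σY2 hσX hσY hcond
end

section
/- Let g : ℤ → ℝ satisfy g(t) ≥ 0 for all t, and let ε ≥ 0 satisfy |g(t+1) − g(t)| ≤ ε·g(t) for all t ∈ ℤ. Then for all t ∈ ℤ and all j ∈ ℤ with |j|·ε < 1: |g(t + j) − g(t)| ≤ (|j|·ε/(1 − |j|·ε))·g(t). -/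
lemma bfd_sandwich_pow (g : ℤ → ℝ) (hg : ∀ t, 0 ≤ g t)
    (ε : ℝ) (hε0 : 0 ≤ ε) (hε1 : ε ≤ 1)
    (hdiff : ∀ t : ℤ, |g (t + 1) - g t| ≤ ε * g t) (t : ℤ) :
    ∀ n : ℕ, (1 - ε) ^ n * g t ≤ g (t + n) ∧ g (t + n) ≤ (1 + ε) ^ n * g t := by
  intro n
  induction n with
  | zero => simp
  | succ n ih =>
    set s : ℤ := t + n with hs
    have hstep := abs_le.mp (hdiff s)
    have h1 : g (s + 1) ≤ (1 + ε) * g s := by nlinarith [hstep.2]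
    have h2 : (1 - ε) * g s ≤ g (s + 1) := by nlinarith [hstep.1]
    have hcast : t + ((n : ℤ) + 1) = s + 1 := by omega
    have hε1' : (0:ℝ) ≤ 1 - ε := by linarith
    constructor
    · push_cast
      rw [hcast]
      calc (1 - ε) ^ (n + 1) * g t = (1 - ε) * ((1 - ε) ^ n * g t) := by ring
        _ ≤ (1 - ε) * g s := by
            exact mul_le_mul_of_nonneg_left ih.1 hε1'
        _ ≤ g (s + 1) := h2
    · push_cast
      rw [hcast]
      calc g (s + 1) ≤ (1 + ε) * g s := h1
        _ ≤ (1 + ε) * ((1 + ε) ^ n * g t) :=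
            mul_le_mul_of_nonneg_left ih.2 (by linarith)
        _ = (1 + ε) ^ (n + 1) * g t := by ring

/-- Paper Lemma 4: a nonnegative sequence with relatively bounded first
differences cannot change too much over a window of `|j|` steps. -/
theorem bounded_first_diff_window (g : ℤ → ℝ) (hg : ∀ t, 0 ≤ g t)
    (ε : ℝ) (hε : 0 ≤ ε) (hdiff : ∀ t : ℤ, |g (t + 1) - g t| ≤ ε * g t) :
    ∀ t j : ℤ, |(j : ℝ)| * ε < 1 →
      |g (t + j) - g t| ≤ (|(j : ℝ)| * ε / (1 - |(j : ℝ)| * ε)) * g t := by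
  intro t j hj
  set n : ℕ := j.natAbs with hn
  have habs : |(j : ℝ)| = (n : ℝ) := by
    rw [hn, Nat.cast_natAbs, Int.cast_abs]
  rw [habs] at hj ⊢
  rcases Nat.eq_zero_or_pos n with h0 | hpos
  · have hj0 : j = 0 := by omega
    subst hj0
    simp [h0]
  · -- n ≥ 1, hence ε < 1
    have hn1 : (1 : ℝ) ≤ (n : ℝ) := by exact_mod_cast hpos
    have hε1 : ε < 1 := by nlinarith
    have hden : (0 : ℝ) < 1 - (n : ℝ) * ε := by linarith
    -- Bernoulli
    have hb : 1 - (n : ℝ) * ε ≤ (1 - ε) ^ n := by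
      have := one_add_mul_le_pow (a := -ε) (by linarith) n
      calc 1 - (n : ℝ) * ε = 1 + (n : ℝ) * (-ε) := by ring
        _ ≤ (1 + -ε) ^ n := this
        _ = (1 - ε) ^ n := by ring_nf
    have hprod : (1 + ε) ^ n * (1 - ε) ^ n ≤ 1 := by
      rw [← mul_pow]
      have h1 : (1 + ε) * (1 - ε) = 1 - ε ^ 2 := by ring
      rw [h1]
      exact pow_le_one₀ (by nlinarith) (by nlinarith)
    have hup : (1 + ε) ^ n ≤ 1 / (1 - (n : ℝ) * ε) := by
      rw [le_div_iff₀ hden]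
      have hpnn : (0 : ℝ) ≤ (1 + ε) ^ n := by positivity
      nlinarith [mul_le_mul_of_nonneg_left hb hpnn]
    -- Sandwich: (1 - nε) g t ≤ g (t+j) ≤ g t / (1 - nε)
    have hsand : (1 - (n : ℝ) * ε) * g t ≤ g (t + j) ∧
        g (t + j) ≤ g t / (1 - (n : ℝ) * ε) := by
      rcases le_or_gt 0 j with hjpos | hjneg
      · have hjn : t + j = t + (n : ℤ) := by omega
        rw [hjn]
        obtain ⟨hL, hU⟩ := bfd_sandwich_pow g hg ε hε hε1.le hdiff t n
        constructor
        · calc (1 - (n : ℝ) * ε) * g t ≤ (1 - ε) ^ n * g t :=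
                mul_le_mul_of_nonneg_right hb (hg t)
            _ ≤ g (t + (n : ℤ)) := hL
        · calc g (t + (n : ℤ)) ≤ (1 + ε) ^ n * g t := hU
            _ ≤ (1 / (1 - (n : ℝ) * ε)) * g t :=
                mul_le_mul_of_nonneg_right hup (hg t)
            _ = g t / (1 - (n : ℝ) * ε) := by ring
      · set s : ℤ := t + j with hs
        have hts : t = s + (n : ℤ) := by omega
        obtain ⟨hL, hU⟩ := bfd_sandwich_pow g hg ε hε hε1.le hdiff s n
        rw [← hts] at hL hU
        constructor
        · -- (1 - nε) g t ≤ g s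
          have h1 : g t ≤ (1 / (1 - (n : ℝ) * ε)) * g s :=
            hU.trans (mul_le_mul_of_nonneg_right hup (hg s))
          rw [div_mul_eq_mul_div, le_div_iff₀ hden] at h1
          linarith [h1]
        · -- g s ≤ g t / (1 - nε)
          have h1 : (1 - (n : ℝ) * ε) * g s ≤ g t :=
            (mul_le_mul_of_nonneg_right hb (hg s)).trans hL
          rw [le_div_iff₀ hden]
          linarith [h1]
    obtain ⟨hL, hU⟩ := hsand
    rw [abs_sub_le_iff]
    have heq : g t / (1 - (n : ℝ) * ε) - g t
        = ((n : ℝ) * ε / (1 - (n : ℝ) * ε)) * g t := by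
      field_simp
      ring
    have hB : (n : ℝ) * ε ≤ (n : ℝ) * ε / (1 - (n : ℝ) * ε) := by
      rw [le_div_iff₀ hden]
      nlinarith [mul_nonneg (Nat.cast_nonneg (α := ℝ) n) hε]
    constructor
    · linarith
    · have : g t - g (t + j) ≤ ((n : ℝ) * ε) * g t := by nlinarith
      nlinarith [mul_le_mul_of_nonneg_right hB (hg t)]
end

section
/- Let g : ℤ → ℝ satisfy g(t) ≥ 0 for all t, and let ε ≥ 0 satisfy g(t+1) − 2·g(t) + g(t−1) ≤ ε·g(t) for all t ∈ ℤ. Fix t ∈ ℤ and define S_j = g(t + j) + g(t − j) for j ≥ 1, S_0 = 2·g(t), and T_j = Σ_{i=−j}^{j} g(t + i). Then for every integer j ≥ 1: S_j − S_{j−1} ≤ ε·T_{j−1}. -/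
/-- Key telescoping inequality in the proof of the paper's Lemma 5:
`S_j − S_{j−1} ≤ ε · T_{j−1}`. -/
theorem bounded_second_diff_telescope (g : ℤ → ℝ) (hg : ∀ t, 0 ≤ g t)
    (ε : ℝ) (hε : 0 ≤ ε)
    (hdiff : ∀ t : ℤ, g (t + 1) - 2 * g t + g (t - 1) ≤ ε * g t)
    (t : ℤ) (S T : ℕ → ℝ)
    (hS0 : S 0 = 2 * g t)
    (hS : ∀ j : ℕ, 1 ≤ j → S j = g (t + j) + g (t - j))
    (hT : ∀ j : ℕ, T j = ∑ i ∈ Finset.Icc (-(j : ℤ)) (j : ℤ), g (t + i)) :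
    ∀ j : ℕ, 1 ≤ j → S j - S (j - 1) ≤ ε * T (j - 1) := by
  have hS' : ∀ j : ℕ, S j = g (t + j) + g (t - j) := by
    intro j
    match j with
    | 0 => simp [hS0]; ring
    | k+1 => exact hS _ (by omega)
  have hTstep : ∀ m : ℕ, T (m + 1) = T m + S (m + 1) := by
    intro m
    rw [hT, hT, hS' (m + 1)]
    have key : Finset.Icc (-((m : ℤ) + 1)) ((m : ℤ) + 1)
        = insert (-((m : ℤ) + 1)) (insert ((m : ℤ) + 1) (Finset.Icc (-(m : ℤ)) (m : ℤ))) := by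
      ext x; simp; omega
    push_cast
    rw [key, Finset.sum_insert (by simp; omega), Finset.sum_insert (by simp)]
    push_cast
    ring_nf
  intro j hj
  induction j with
  | zero => omega
  | succ n ih =>
    rcases Nat.eq_zero_or_pos n with rfl | hn
    · have h0 := hdiff t
      have hT0 : T 0 = g t := by rw [hT]; simp
      have h1 : S 1 = g (t + 1) + g (t - 1) := by rw [hS' 1]; push_cast; ring_nf
      simp only [Nat.sub_self]
      rw [h1, hS0, hT0]
      linarith
    · have ih' := ih hn
      have h1 := hdiff (t + n)
      have h2 := hdiff (t - n)
      have hc : ((n - 1 : ℕ) : ℤ) = (n : ℤ) - 1 := by omega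
      have eS1 : S (n + 1) = g (t + n + 1) + g (t - n - 1) := by
        rw [hS' (n + 1)]; push_cast; ring_nf
      have eSn : S n = g (t + n) + g (t - n) := hS' n
      have eSp : S (n - 1) = g (t + n - 1) + g (t - n + 1) := by
        rw [hS' (n - 1), hc]; ring_nf
      have eT : T n = T (n - 1) + S n := by
        have h := hTstep (n - 1)
        rwa [Nat.sub_add_cancel hn] at h
      simp only [Nat.add_sub_cancel]
      rw [eT]
      have key : S (n + 1) - S n ≤ (S n - S (n - 1)) + ε * S n := by
        rw [eS1, eSn, eSp]
        have e1 : g (t + ↑n + 1) - 2 * g (t + ↑n) + g (t + ↑n - 1) ≤ ε * g (t + ↑n) := h1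
        have e2 : g (t - ↑n + 1) - 2 * g (t - ↑n) + g (t - ↑n - 1) ≤ ε * g (t - ↑n) := by
          have := hdiff (t - n); convert this using 3 <;> ring
        nlinarith [e1, e2]
      nlinarith [key, ih']
end

section
/- Let g : ℤ → ℝ satisfy g(t) ≥ 0 for all t, and let ε ≥ 0 satisfy g(t+1) − 2·g(t) + g(t−1) ≤ ε·g(t) for all t ∈ ℤ. Fix t ∈ ℤ and define T_j = Σ_{i=−j}^{j} g(t + i). Then T_1 ≤ (3 + ε)·g(t), and for every integer j ≥ 2: T_j ≤ T_{j−1} + (2 + ε)·g(t) + ε·Σ_{i=1}^{j−1} T_i. -/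
/-- The recurrence for `T_j` in the proof of the paper's Lemma 5:
`T_1 ≤ (3 + ε)·g t` and `T_j ≤ T_{j−1} + (2 + ε)·g t + ε·Σ_{i=1}^{j−1} T_i`. -/
theorem bounded_second_diff_recurrence (g : ℤ → ℝ) (hg : ∀ t, 0 ≤ g t)
    (ε : ℝ) (hε : 0 ≤ ε)
    (hdiff : ∀ t : ℤ, g (t + 1) - 2 * g t + g (t - 1) ≤ ε * g t)
    (t : ℤ) (T : ℕ → ℝ)
    (hT : ∀ j : ℕ, T j = ∑ i ∈ Finset.Icc (-(j : ℤ)) (j : ℤ), g (t + i)) :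
    T 1 ≤ (3 + ε) * g t ∧
    ∀ j : ℕ, 2 ≤ j →
      T j ≤ T (j - 1) + (2 + ε) * g t + ε * ∑ i ∈ Finset.Icc 1 (j - 1), T i := by
  set S : ℕ → ℝ := fun j => g (t + (j : ℤ)) + g (t - (j : ℤ)) with hS
  -- T (j+1) = T j + S (j+1)
  have hTstep : ∀ j : ℕ, T (j + 1) = T j + S (j + 1) := by
    intro j
    rw [hT, hT]
    have hset : Finset.Icc (-((j : ℤ) + 1)) ((j : ℤ) + 1)
        = insert (-((j : ℤ) + 1)) (insert ((j : ℤ) + 1) (Finset.Icc (-(j : ℤ)) (j : ℤ))) := by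
      ext x; simp only [Finset.mem_Icc, Finset.mem_insert]; omega
    push_cast
    rw [hset, Finset.sum_insert (by simp only [Finset.mem_insert, Finset.mem_Icc]; omega),
      Finset.sum_insert (by simp only [Finset.mem_Icc]; omega)]
    simp only [hS]
    push_cast
    ring_nf
  -- T j = g t + ∑_{k=1}^j S k
  have hTsum : ∀ j : ℕ, T j = g t + ∑ k ∈ Finset.Icc 1 j, S k := by
    intro j
    induction j with
    | zero => simp [hT 0]
    | succ n ih =>
        rw [hTstep n, ih, Finset.sum_Icc_succ_top (by omega)]
        ring
  -- the difference recurrence for S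
  have hP : ∀ j : ℕ, S (j + 1) ≤ S j + ε * g t + ε * ∑ k ∈ Finset.Icc 1 j, S k := by
    intro j
    induction j with
    | zero =>
        have h := hdiff t
        have he : Finset.Icc 1 0 = (∅ : Finset ℕ) := rfl
        simp only [hS, he, Finset.sum_empty, Nat.cast_zero, Nat.cast_one, add_zero, sub_zero]
        push_cast
        linarith
    | succ n ih =>
        have h1 := hdiff (t + (n + 1 : ℕ))
        have h2 := hdiff (t - (n + 1 : ℕ))
        have key : S (n + 2) ≤ 2 * S (n + 1) - S n + ε * S (n + 1) := by
          simp only [hS]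
          push_cast
          have e1 : t + ((n : ℤ) + 1) + 1 = t + ((n : ℤ) + 2) := by ring
          have e2 : t + ((n : ℤ) + 1) - 1 = t + (n : ℤ) := by ring
          have e3 : t - ((n : ℤ) + 1) + 1 = t - (n : ℤ) := by ring
          have e4 : t - ((n : ℤ) + 1) - 1 = t - ((n : ℤ) + 2) := by ring
          push_cast at h1 h2
          rw [e1, e2] at h1
          rw [e3, e4] at h2
          nlinarith [h1, h2]
        have hsum : ∑ k ∈ Finset.Icc 1 (n + 1), S k
            = (∑ k ∈ Finset.Icc 1 n, S k) + S (n + 1) :=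
          Finset.sum_Icc_succ_top (by omega) _
        rw [hsum]
        nlinarith [key, ih]
  -- main claim
  have hC : ∀ j : ℕ, S (j + 1) ≤ (2 + ε) * g t + ε * ∑ i ∈ Finset.Icc 1 j, T i := by
    intro j
    induction j with
    | zero =>
        have h := hP 0
        have he : Finset.Icc 1 0 = (∅ : Finset ℕ) := rfl
        have hs0 : S 0 = 2 * g t := by
          simp only [hS, Nat.cast_zero, add_zero, sub_zero]; ring
        rw [he, Finset.sum_empty] at h ⊢
        linarith
    | succ n ih =>
        have hp := hP (n + 1)
        have hts := hTsum (n + 1)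
        have h1 : ∑ i ∈ Finset.Icc 1 (n + 1), T i
            = (∑ i ∈ Finset.Icc 1 n, T i) + T (n + 1) :=
          Finset.sum_Icc_succ_top (by omega) _
        rw [h1]
        calc S (n + 2) ≤ S (n + 1) + ε * g t + ε * ∑ k ∈ Finset.Icc 1 (n + 1), S k := hp
          _ ≤ (2 + ε) * g t + ε * ∑ i ∈ Finset.Icc 1 n, T i + ε * g t
              + ε * ∑ k ∈ Finset.Icc 1 (n + 1), S k := by linarith [ih]
          _ = (2 + ε) * g t + ε * ((∑ i ∈ Finset.Icc 1 n, T i) + T (n + 1)) := by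
              rw [hts]; ring
  constructor
  · have h1 : T 1 = T 0 + S 1 := hTstep 0
    have h0 : T 0 = g t := by simp [hT 0]
    have hc := hC 0
    have he : Finset.Icc 1 0 = (∅ : Finset ℕ) := rfl
    rw [he, Finset.sum_empty] at hc
    linarith
  · intro j hj
    obtain ⟨k, rfl⟩ : ∃ k, j = k + 1 := ⟨j - 1, by omega⟩
    have : T (k + 1) = T k + S (k + 1) := hTstep k
    have hc := hC k
    simp only [Nat.add_sub_cancel]
    linarith
end

section
/- Let g : ℤ → ℝ satisfy g(t) ≥ 0 for all t, and let ε ≥ 0 satisfy |g(t+1) − g(t)| ≤ ε·g(t) for all t ∈ ℤ. Let w ≥ 1 be an integer with w·ε < 1, and let a_{−w}, …, a_w be nonnegative reals with Σ_{i=−w}^{w} a_i = 1. Then for all t ∈ ℤ: |Σ_{i=−w}^{w} a_i·g(t + i) − g(t)| ≤ (w·ε/(1 − w·ε))·g(t). -/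
/-!
Over `m` steps the relative-difference bound loses at most a factor `1 - m ε` in either
direction, so for `|i| ≤ w` the values `g t` and `g (t + i)` are each at least `1 - w ε` times
the other. This places every `g (t + i)` in the interval of radius `w ε / (1 - w ε) · g t`
around `g t`, and a convex combination cannot leave an interval.
-/

theorem one_sub_nat_mul_le_of_one_sub_mul_le_succ {f : ℕ → ℝ} {ε : ℝ} (hε : ε ≤ 1)
    (hf₀ : 0 ≤ f 0) (hf : ∀ n, (1 - ε) * f n ≤ f (n + 1)) (m : ℕ) :
    (1 - m * ε) * f 0 ≤ f m := by
  induction m with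
  | zero => simp
  | succ m ih =>
    calc (1 - (m + 1 : ℕ) * ε) * f 0 ≤ (1 - ε) * ((1 - m * ε) * f 0) := by
          push_cast
          nlinarith [mul_nonneg (mul_nonneg m.cast_nonneg (sq_nonneg ε)) hf₀]
      _ ≤ (1 - ε) * f m := mul_le_mul_of_nonneg_left ih (by linarith)
      _ ≤ f (m + 1) := hf m

theorem abs_sub_le_div_mul_of_one_sub_mul_le {c x y : ℝ} (hc : c < 1) (hx : 0 ≤ x)
    (hxy : (1 - c) * x ≤ y) (hyx : (1 - c) * y ≤ x) : |y - x| ≤ c / (1 - c) * x := by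
  have hpos : 0 < 1 - c := by linarith
  have hdiv : c / (1 - c) * x = x / (1 - c) - x := by field_simp; ring
  rw [abs_sub_le_iff, hdiv]
  constructor
  · linarith [(le_div_iff₀' hpos).mpr hyx]
  · have : c * x ≤ c / (1 - c) * x := by
      rw [← sub_nonneg, ← sub_mul]
      exact mul_nonneg (by rw [div_sub' hpos.ne']; ring_nf; positivity) hx
    linarith

section RelativeDifferences

variable {g : ℤ → ℝ} {ε : ℝ}

theorem one_sub_mul_le_succ (hdiff : ∀ t, |g (t + 1) - g t| ≤ ε * g t)
    (t : ℤ) : (1 - ε) * g t ≤ g (t + 1) := by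
  linarith [(abs_sub_le_iff.mp (hdiff t)).2]

theorem one_sub_mul_succ_le (hdiff : ∀ t, |g (t + 1) - g t| ≤ ε * g t)
    (hε : ε ≤ 1) {t : ℤ} (hg : 0 ≤ g t) :
    (1 - ε) * g (t + 1) ≤ g t := by
  have hup : g (t + 1) ≤ (1 + ε) * g t := by linarith [(abs_sub_le_iff.mp (hdiff t)).1]
  nlinarith [mul_le_mul_of_nonneg_left hup (by linarith : 0 ≤ 1 - ε), sq_nonneg ε]

theorem one_sub_mul_le_of_abs_sub_le (hdiff : ∀ t, |g (t + 1) - g t| ≤ ε * g t)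
    (hε₀ : 0 ≤ ε) (hε₁ : ε ≤ 1) (hg : ∀ t, 0 ≤ g t)
    {m : ℕ} {s s' : ℤ} (h : |s' - s| ≤ m) : (1 - m * ε) * g s ≤ g s' := by
  set k := (s' - s).natAbs
  have hkm : (k : ℝ) ≤ m := by exact_mod_cast (Int.natCast_natAbs _ ▸ h :)
  calc (1 - m * ε) * g s ≤ (1 - k * ε) * g s := by gcongr; exact hg s
    _ ≤ g s' := by
      rcases Int.natAbs_eq (s' - s) with hk | hk
      · have := one_sub_nat_mul_le_of_one_sub_mul_le_succ (f := fun n : ℕ ↦ g (s + n)) hε₁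
          (hg _) (fun n ↦ by simpa [add_assoc] using one_sub_mul_le_succ hdiff (s + n)) k
        rw [show s' = s + k by omega]
        simpa using this
      · have := one_sub_nat_mul_le_of_one_sub_mul_le_succ (f := fun n : ℕ ↦ g (s - n)) hε₁
          (hg _) (fun n ↦ by
            simpa [sub_add_cancel, sub_add_eq_sub_sub] using
              one_sub_mul_succ_le hdiff hε₁ (hg (s - (n + 1)))) k
        rw [show s' = s - k by omega]
        simpa using this

end RelativeDifferences

/-- Mean-deviation step in the proof of the paper's Theorem 7: a convex
combination of a nonnegative sequence with relatively bounded first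
differences over a window of radius `w` stays within a relative factor
`w·ε/(1 − w·ε)` of the center value. -/
theorem convex_combination_deviation (g : ℤ → ℝ) (hg : ∀ t, 0 ≤ g t)
    (ε : ℝ) (hε : 0 ≤ ε) (hdiff : ∀ t : ℤ, |g (t + 1) - g t| ≤ ε * g t)
    (w : ℕ) (hw : 1 ≤ w) (hwε : (w : ℝ) * ε < 1)
    (a : ℤ → ℝ) (ha : ∀ i ∈ Finset.Icc (-(w : ℤ)) (w : ℤ), 0 ≤ a i)
    (hsum : ∑ i ∈ Finset.Icc (-(w : ℤ)) (w : ℤ), a i = 1) :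
    ∀ t : ℤ,
      |(∑ i ∈ Finset.Icc (-(w : ℤ)) (w : ℤ), a i * g (t + i)) - g t|
        ≤ ((w : ℝ) * ε / (1 - (w : ℝ) * ε)) * g t := by
  intro t
  have hε₁ : ε ≤ 1 := by nlinarith [(Nat.one_le_cast (α := ℝ)).mpr hw]
  have hclose : ∀ i ∈ Finset.Icc (-(w : ℤ)) (w : ℤ),
      g (t + i) ∈ Metric.closedBall (g t) ((w : ℝ) * ε / (1 - (w : ℝ) * ε) * g t) := by
    intro i hi
    have hi' : |i| ≤ w := abs_le.mpr (Finset.mem_Icc.mp hi)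
    rw [Metric.mem_closedBall, Real.dist_eq]
    refine abs_sub_le_div_mul_of_one_sub_mul_le hwε (hg t) ?_ ?_
    · exact one_sub_mul_le_of_abs_sub_le hdiff hε hε₁ hg (by simpa using hi')
    · exact one_sub_mul_le_of_abs_sub_le hdiff hε hε₁ hg (by simpa [abs_neg] using hi')
  simpa [Metric.mem_closedBall, Real.dist_eq] using
    (convex_closedBall _ _).sum_mem ha hsum hclose
end

section
/- Let s : ℤ → ℝ satisfy s(t) ≥ 0 for all t, and let ε ≥ 0 satisfy |s(t+1) − s(t)| ≤ ε·s(t) for all t ∈ ℤ. Let w ≥ 1 be an integer with w·ε < 1, let n : ℤ → ℝ be positive, and set n_w = Σ_{i=−w}^{w} n(t + i). Then Σ_{i=−w}^{w} (n(t+i)/n_w²)·s(t + i) ≤ (1/n_w)·(1 + w·ε/(1 − w·ε))·s(t). -/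
/-!
Along a window of half-width `w` the relative increments are at most `ε`, so a telescoping
Bernoulli-type estimate gives `(1 - wε)·s(t + i) ≤ s(t)` for `|i| ≤ w`. Bounding every `s(t + i)`
by `s(t) / (1 - wε)` turns the sum into `(Σ_i n(t+i)) / n_w² · s(t) / (1 - wε) = s(t) / (n_w (1 - wε))`,
and `1 / (1 - wε) = 1 + wε / (1 - wε)`.
-/

open Finset

lemma one_sub_mul_le_of_abs_sub_le_s13 {a b ε : ℝ} (ha : 0 ≤ a) (hb : 0 ≤ b)
    (h : |b - a| ≤ ε * a) : (1 - ε) * b ≤ a ∧ (1 - ε) * a ≤ b := by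
  obtain ⟨hlo, hhi⟩ := abs_le.mp h
  refine ⟨?_, by linarith⟩
  -- `(1 - ε)(1 + ε) ≤ 1` when `ε ≤ 1`; otherwise the left side is nonpositive.
  rcases le_or_gt ε 1 with hε | hε
  · nlinarith [mul_le_mul_of_nonneg_left hhi (sub_nonneg.mpr hε), mul_nonneg (sq_nonneg ε) ha]
  · nlinarith

lemma one_sub_nat_mul_mul_le_of_one_sub_mul_le {f : ℕ → ℝ} {ε : ℝ} (hf : ∀ k, 0 ≤ f k)
    (hε : 0 ≤ ε) (hstep : ∀ k, (1 - ε) * f (k + 1) ≤ f k) :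
    ∀ k : ℕ, k * ε ≤ 1 → (1 - k * ε) * f k ≤ f 0 := by
  intro k
  induction k with
  | zero => simp
  | succ k ih =>
    intro hk
    push_cast at hk
    have hk' : (k : ℝ) * ε ≤ 1 := by linarith
    calc (1 - (↑(k + 1) : ℝ) * ε) * f (k + 1)
        ≤ (1 - k * ε) * ((1 - ε) * f (k + 1)) := by
          have : 0 ≤ (k : ℝ) * ε ^ 2 * f (k + 1) := by have := hf (k + 1); positivity
          push_cast; nlinarith
      _ ≤ (1 - k * ε) * f k := mul_le_mul_of_nonneg_left (hstep k) (by linarith)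
      _ ≤ f 0 := ih hk'

lemma one_sub_mul_mul_le_of_mem_Icc {s : ℤ → ℝ} {ε : ℝ} (hs : ∀ t, 0 ≤ s t) (hε : 0 ≤ ε)
    (hdiff : ∀ t : ℤ, |s (t + 1) - s t| ≤ ε * s t) {w : ℕ} (hwε : (w : ℝ) * ε ≤ 1) (t : ℤ)
    {i : ℤ} (hi : i ∈ Icc (-(w : ℤ)) w) : (1 - w * ε) * s (t + i) ≤ s t := by
  have hstep := fun u => one_sub_mul_le_of_abs_sub_le_s13 (hs u) (hs (u + 1)) (hdiff u)
  obtain ⟨k, hki⟩ : ∃ k : ℕ, i = k ∨ i = -k := Int.eq_nat_or_neg i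
  have hkw : k ≤ w := by rw [mem_Icc] at hi; omega
  have hkε : (k : ℝ) * ε ≤ 1 := le_trans (by gcongr) hwε
  have hwk : (1 - w * ε) * s (t + i) ≤ (1 - k * ε) * s (t + i) := by
    gcongr
    exact hs _
  refine hwk.trans ?_
  rcases hki with rfl | rfl
  · simpa using one_sub_nat_mul_mul_le_of_one_sub_mul_le (f := fun k : ℕ => s (t + k))
      (fun _ => hs _) hε (fun j => by simpa [add_assoc] using (hstep (t + j)).1) k hkε
  · simpa [← sub_eq_add_neg] using one_sub_nat_mul_mul_le_of_one_sub_mul_le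
      (f := fun k : ℕ => s (t - k)) (fun _ => hs _) hε
      (fun j => by simpa [sub_add_eq_sub_sub, sub_add_cancel] using (hstep (t - j - 1)).2) k hkε

lemma sum_div_sq_mul_le {ι : Type*} (I : Finset ι) {a x : ι → ℝ} {M : ℝ}
    (ha : ∀ i ∈ I, 0 ≤ a i) (hx : ∀ i ∈ I, x i ≤ M) :
    ∑ i ∈ I, a i / (∑ j ∈ I, a j) ^ 2 * x i ≤ M / ∑ j ∈ I, a j := by
  set N := ∑ j ∈ I, a j
  calc ∑ i ∈ I, a i / N ^ 2 * x i
      ≤ ∑ i ∈ I, a i / N ^ 2 * M :=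
        sum_le_sum fun i hi => mul_le_mul_of_nonneg_left (hx i hi) (by have := ha i hi; positivity)
    _ = N / N ^ 2 * M := by rw [← sum_mul, ← sum_div]
    _ = M / N := by rcases eq_or_ne N 0 with h | h <;> [simp [h]; field_simp]

theorem weighted_variance_bound_general (s : ℤ → ℝ) (hs : ∀ t, 0 ≤ s t)
    (ε : ℝ) (hε : 0 ≤ ε) (hdiff : ∀ t : ℤ, |s (t + 1) - s t| ≤ ε * s t)
    (w : ℕ) (hwε : (w : ℝ) * ε < 1)
    (n : ℤ → ℝ) (hn : ∀ t, 0 < n t) (t : ℤ)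
    (nw : ℝ) (hnw : nw = ∑ i ∈ Finset.Icc (-(w : ℤ)) (w : ℤ), n (t + i)) :
    ∑ i ∈ Finset.Icc (-(w : ℤ)) (w : ℤ), (n (t + i) / nw ^ 2) * s (t + i)
      ≤ (1 / nw) * (1 + (w : ℝ) * ε / (1 - (w : ℝ) * ε)) * s t := by
  have hgap : 0 < 1 - (w : ℝ) * ε := by linarith
  have hwindow : ∀ i ∈ Icc (-(w : ℤ)) w, s (t + i) ≤ s t / (1 - w * ε) := fun i hi => by
    rw [le_div_iff₀ hgap, mul_comm]
    exact one_sub_mul_mul_le_of_mem_Icc hs hε hdiff hwε.le t hi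
  calc ∑ i ∈ Icc (-(w : ℤ)) w, n (t + i) / nw ^ 2 * s (t + i)
      ≤ s t / (1 - w * ε) / nw := by
        subst hnw; exact sum_div_sq_mul_le _ (fun i _ => (hn (t + i)).le) hwindow
    _ = (1 / nw) * (1 + w * ε / (1 - w * ε)) * s t := by field_simp; ring

/-- Variance-deviation step in the proof of the paper's Theorem 7:
`Σ_i (n_{t+i}/n_w²)·s_{t+i} ≤ (1/n_w)·(1 + wε/(1 − wε))·s_t`. -/
theorem weighted_variance_bound (s : ℤ → ℝ) (hs : ∀ t, 0 ≤ s t)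
    (ε : ℝ) (hε : 0 ≤ ε) (hdiff : ∀ t : ℤ, |s (t + 1) - s t| ≤ ε * s t)
    (w : ℕ) (hw : 1 ≤ w) (hwε : (w : ℝ) * ε < 1)
    (n : ℤ → ℝ) (hn : ∀ t, 0 < n t) (t : ℤ)
    (nw : ℝ) (hnw : nw = ∑ i ∈ Finset.Icc (-(w : ℤ)) (w : ℤ), n (t + i)) :
    ∑ i ∈ Finset.Icc (-(w : ℤ)) (w : ℤ), (n (t + i) / nw ^ 2) * s (t + i)
      ≤ (1 / nw) * (1 + (w : ℝ) * ε / (1 - (w : ℝ) * ε)) * s t :=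
  weighted_variance_bound_general s hs ε hε hdiff w hwε n hn t nw hnw
end

section
/- Let w ≥ 1 be an integer, let n_{−w}, …, n_w be positive reals, and let g_{−w}, …, g_w be reals. Set n_w^{tot} = Σ_{i=−w}^{w} n_i, μ_n = n_w^{tot}/(2w+1), and σ_n = √(Σ_{i=−w}^{w} (n_i − μ_n)²/(2w+1)). Then for every c ∈ ℝ: |(1/n_w^{tot})·Σ_{i=−w}^{w} n_i·g_i − (1/(2w+1))·Σ_{i=−w}^{w} g_i| ≤ (σ_n/μ_n)·√((1/(2w+1))·Σ_{i=−w}^{w} (g_i − c)²) ≤ (σ_n/μ_n)·max_{−w ≤ i ≤ w} |g_i − c|. -/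
/-!
Write `μ` for the mean of the counts `n i` over the window. Since `∑ (n i - μ) = 0`, the
difference of the weighted and the unweighted average equals
`(∑ (n i - μ) * (g i - c)) / ∑ n i` for every reference value `c`; Cauchy–Schwarz bounds the
numerator by the product of the root-mean-square deviations of `n` and `g` times the window
size, and a root mean square never exceeds the maximum of the absolute values.
-/

open Finset

section WeightedAverage

variable {ι : Type*} (s : Finset ι)

theorem abs_sum_mul_le_sqrt_mul_sqrt (f g : ι → ℝ) :
    |∑ i ∈ s, f i * g i| ≤ √(∑ i ∈ s, f i ^ 2) * √(∑ i ∈ s, g i ^ 2) := by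
  rw [← Real.sqrt_mul (sum_nonneg fun _ _ ↦ sq_nonneg _)]
  exact Real.abs_le_sqrt (sum_mul_sq_le_sq_mul_sq s f g)

theorem sqrt_mean_sq_le_sup'_abs (hs : s.Nonempty) (f : ι → ℝ) :
    √((1 / (#s : ℝ)) * ∑ i ∈ s, f i ^ 2) ≤ s.sup' hs (fun i ↦ |f i|) := by
  set M := s.sup' hs (fun i ↦ |f i|)
  have hM : 0 ≤ M := (abs_nonneg _).trans (le_sup' (fun i ↦ |f i|) hs.choose_spec)
  have hcard : (0 : ℝ) < #s := by exact_mod_cast hs.card_pos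
  have hsum : ∑ i ∈ s, f i ^ 2 ≤ #s * M ^ 2 := by
    rw [← nsmul_eq_mul, ← sum_const]
    refine sum_le_sum fun i hi ↦ ?_
    rw [← sq_abs]
    exact pow_le_pow_left₀ (abs_nonneg _) (le_sup' (fun i ↦ |f i|) hi) 2
  refine Real.sqrt_le_iff.2 ⟨hM, ?_⟩
  rwa [one_div, inv_mul_le_iff₀ hcard]

variable (n g : ι → ℝ)

theorem weighted_sub_average_eq_sum_centered_mul (hn : ∑ i ∈ s, n i ≠ 0) (c : ℝ) :
    (1 / ∑ i ∈ s, n i) * ∑ i ∈ s, n i * g i - (1 / (#s : ℝ)) * ∑ i ∈ s, g i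
      = (∑ i ∈ s, (n i - (∑ j ∈ s, n j) / #s) * (g i - c)) / ∑ i ∈ s, n i := by
  have hs : s.Nonempty := nonempty_of_sum_ne_zero hn
  have hcard : (#s : ℝ) ≠ 0 := by exact_mod_cast hs.card_pos.ne'
  simp only [sub_mul, mul_sub, sum_sub_distrib, ← sum_mul, ← mul_sum, sum_const, nsmul_eq_mul]
  field_simp
  ring

theorem abs_weighted_sub_average_le (hn : 0 < ∑ i ∈ s, n i) (c : ℝ) :
    |(1 / ∑ i ∈ s, n i) * ∑ i ∈ s, n i * g i - (1 / (#s : ℝ)) * ∑ i ∈ s, g i|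
      ≤ √((∑ i ∈ s, (n i - (∑ j ∈ s, n j) / #s) ^ 2) / #s) / ((∑ j ∈ s, n j) / #s)
          * √((1 / (#s : ℝ)) * ∑ i ∈ s, (g i - c) ^ 2) := by
  have hcard : (0 : ℝ) < #s := by exact_mod_cast (nonempty_of_sum_ne_zero hn.ne').card_pos
  rw [weighted_sub_average_eq_sum_centered_mul s n g hn.ne' c, abs_div, abs_of_pos hn,
    div_le_iff₀ hn]
  refine (abs_sum_mul_le_sqrt_mul_sqrt s _ (fun i ↦ g i - c)).trans_eq ?_
  rw [one_div, inv_mul_eq_div, Real.sqrt_div' _ hcard.le, Real.sqrt_div' _ hcard.le]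
  generalize √(∑ i ∈ s, (n i - (∑ j ∈ s, n j) / #s) ^ 2) = a
  generalize √(∑ i ∈ s, (g i - c) ^ 2) = b
  field_simp
  rw [Real.sq_sqrt hcard.le]

end WeightedAverage

theorem card_Icc_neg_natCast (w : ℕ) : (#(Icc (-(w : ℤ)) w) : ℝ) = 2 * w + 1 := by
  rw [Int.card_Icc, show ((w : ℤ) + 1 - -(w : ℤ)).toNat = 2 * w + 1 by omega]
  push_cast
  ring

/-- Cauchy–Schwarz step in the proof of the paper's Lemma 8: the count-weighted
average differs from the unweighted average by at most `(σ_n/μ_n)` times the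
root-mean-square (hence the maximum) deviation of the values from any `c`. -/
theorem weighted_vs_unweighted_average (w : ℕ)
    (n g : ℤ → ℝ) (hn : ∀ i ∈ Finset.Icc (-(w : ℤ)) (w : ℤ), 0 < n i)
    (ntot μn σn : ℝ)
    (hntot : ntot = ∑ i ∈ Finset.Icc (-(w : ℤ)) (w : ℤ), n i)
    (hμn : μn = ntot / (2 * w + 1))
    (hσn : σn = Real.sqrt ((∑ i ∈ Finset.Icc (-(w : ℤ)) (w : ℤ), (n i - μn) ^ 2) / (2 * w + 1))) :
    ∀ c : ℝ,
      |(1 / ntot) * ∑ i ∈ Finset.Icc (-(w : ℤ)) (w : ℤ), n i * g i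
          - (1 / (2 * (w : ℝ) + 1)) * ∑ i ∈ Finset.Icc (-(w : ℤ)) (w : ℤ), g i|
        ≤ (σn / μn) *
            Real.sqrt ((1 / (2 * (w : ℝ) + 1)) *
              ∑ i ∈ Finset.Icc (-(w : ℤ)) (w : ℤ), (g i - c) ^ 2) ∧
      (σn / μn) *
          Real.sqrt ((1 / (2 * (w : ℝ) + 1)) *
            ∑ i ∈ Finset.Icc (-(w : ℤ)) (w : ℤ), (g i - c) ^ 2)
        ≤ (σn / μn) *
            (Finset.Icc (-(w : ℤ)) (w : ℤ)).sup'
              (Finset.nonempty_Icc.mpr (by omega)) (fun i => |g i - c|) := by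
  intro c
  have hne : (Icc (-(w : ℤ)) w).Nonempty := nonempty_Icc.mpr (by omega)
  have hpos : 0 < ∑ i ∈ Icc (-(w : ℤ)) w, n i := sum_pos hn hne
  have hμpos : 0 < μn := hμn ▸ hntot ▸ div_pos hpos (by positivity)
  subst hσn hμn hntot
  rw [← card_Icc_neg_natCast w] at hμpos ⊢
  exact ⟨abs_weighted_sub_average_le _ n g hpos c,
    mul_le_mul_of_nonneg_left (sqrt_mean_sq_le_sup'_abs _ hne _)
      (div_nonneg (Real.sqrt_nonneg _) hμpos.le)⟩
end

section
/- Let f_t > 0, s_t > 0, μ > 0, let n_{−w}, …, n_w be positive reals with center value n_0 and total n_w^{tot} = Σ_{i=−w}^{w} n_i, and let γ_f ≥ 0 and γ_σ ≥ 0. Let m_w ∈ ℝ and v_w ≥ 0 satisfy |m_w/μ − f_t| ≤ γ_f·f_t and v_w ≤ (1/n_w^{tot})·(1 + γ_σ)·s_t. Assume √((n_0/n_w^{tot})·(1 + γ_σ)) < 1. Then for every λ ≥ γ_f/(1 − √((n_0/n_w^{tot})·(1 + γ_σ))): N(m_w, v_w)({x ∈ ℝ : |x/μ − f_t| ≥ λ·f_t})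 ≤ N(μ·f_t, s_t/n_0)({x ∈ ℝ : |x/μ − f_t| ≥ λ·f_t}). -/
/-!
Write both laws as images of the standard Gaussian, `N(m, v)` under `z ↦ √v z + m` and
`N(c, v₀)` under `z ↦ √v₀ z + c`, with `c = μ f_t` and `a = λ μ f_t`. With `r` the square root in
the hypothesis, the assumptions give `|m - c| ≤ (1 - r) a` and `√v ≤ r √v₀`. So if
`a ≤ |√v z + m - c|` then `a ≤ r √v₀ |z| + (1 - r) a`, i.e. `a ≤ √v₀ |z|`: the event for
`N(m, v)` pulls back into the one for `N(c, v₀)`.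
-/

open MeasureTheory ProbabilityTheory
open scoped NNReal

lemma gaussianReal_eq_map_stdGaussian (m : ℝ) (v : ℝ≥0) :
    gaussianReal m v = (gaussianReal 0 1).map (fun z ↦ √v * z + m) := by
  have hv : (.mk (√(v : ℝ) ^ 2) (sq_nonneg _) : ℝ≥0) * 1 = v := by
    ext; simp
  change _ = (gaussianReal 0 1).map ((· + m) ∘ (√v * ·))
  rw [← Measure.map_map (measurable_add_const m) (measurable_const_mul _),
    gaussianReal_map_const_mul, hv, gaussianReal_map_add_const, mul_zero, zero_add]

lemma gaussianReal_setOf_le_abs_sub_le {m c a r : ℝ} {v v₀ : ℝ≥0} (hr : 0 < r)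
    (hσ : √(v : ℝ) ≤ r * √(v₀ : ℝ)) (hm : |m - c| ≤ (1 - r) * a) :
    gaussianReal m v {x | a ≤ |x - c|} ≤ gaussianReal c v₀ {x | a ≤ |x - c|} := by
  have hs : MeasurableSet {x : ℝ | a ≤ |x - c|} :=
    measurableSet_le measurable_const (measurable_id.sub_const c).abs
  rw [gaussianReal_eq_map_stdGaussian m, gaussianReal_eq_map_stdGaussian c,
    Measure.map_apply (by fun_prop) hs, Measure.map_apply (by fun_prop) hs]
  refine measure_mono fun z (hz : a ≤ |√v * z + m - c|) ↦ show a ≤ |√v₀ * z + c - c| from ?_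
  rw [add_sub_cancel_right, abs_mul, abs_of_nonneg (Real.sqrt_nonneg _)]
  have : r * a ≤ r * (√v₀ * |z|) := by
    calc r * a ≤ |√v * z + (m - c)| - (1 - r) * a := by rw [← add_sub_assoc]; linarith
      _ ≤ √v * |z| := by
        have := abs_add_le (√v * z) (m - c)
        rw [abs_mul, abs_of_nonneg (Real.sqrt_nonneg _)] at this; linarith
      _ ≤ r * (√v₀ * |z|) := by
        rw [← mul_assoc]; exact mul_le_mul_of_nonneg_right hσ (abs_nonneg z)
  exact le_of_mul_le_mul_left this hr

lemma Real.sqrt_coe_toNNReal (x : ℝ) : √(x.toNNReal : ℝ) = √x := by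
  unfold Real.sqrt; rw [Real.toNNReal_coe]

lemma abs_div_sub_eq {μ : ℝ} (hμ : 0 < μ) (x f : ℝ) : |x / μ - f| = |x - μ * f| / μ := by
  rw [← abs_of_pos hμ, ← abs_div, abs_of_pos hμ, sub_div, mul_div_cancel_left₀ _ hμ.ne']

lemma setOf_abs_div_sub_ge_eq {μ : ℝ} (hμ : 0 < μ) (f t : ℝ) :
    {x : ℝ | |x / μ - f| ≥ t} = {x | μ * t ≤ |x - μ * f|} := by
  ext x
  simp only [Set.mem_ofPred_eq, ge_iff_le, abs_div_sub_eq hμ, le_div_iff₀ hμ, mul_comm t]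

theorem smoothing_better_small_count_variance_general (ft st μ : ℝ)
    (hft : 0 < ft) (hμ : 0 < μ)
    (w : ℕ)
    (n : ℤ → ℝ) (hn : ∀ i ∈ Finset.Icc (-(w : ℤ)) (w : ℤ), 0 < n i)
    (ntot : ℝ) (hntot : ntot = ∑ i ∈ Finset.Icc (-(w : ℤ)) (w : ℤ), n i)
    (γf γσ : ℝ) (hγσ : 0 ≤ γσ)
    (mw vw : ℝ)
    (hmean : |mw / μ - ft| ≤ γf * ft)
    (hvar : vw ≤ (1 / ntot) * (1 + γσ) * st)
    (hratio : Real.sqrt ((n 0 / ntot) * (1 + γσ)) < 1) :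
    ∀ lam : ℝ, γf / (1 - Real.sqrt ((n 0 / ntot) * (1 + γσ))) ≤ lam →
      gaussianReal mw vw.toNNReal {x : ℝ | |x / μ - ft| ≥ lam * ft} ≤
      gaussianReal (μ * ft) ((st / n 0).toNNReal)
        {x : ℝ | |x / μ - ft| ≥ lam * ft} := by
  intro lam hlam
  set r := √((n 0 / ntot) * (1 + γσ))
  have hn0 : 0 < n 0 := hn 0 (by simp)
  have hntot_pos : 0 < ntot := hntot ▸ Finset.sum_pos hn ⟨0, by simp⟩
  have hr : 0 < r := by positivity
  have hγf_le : γf ≤ lam * (1 - r) := (div_le_iff₀ (sub_pos.2 hratio)).1 hlam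
  rw [setOf_abs_div_sub_ge_eq hμ]
  refine gaussianReal_setOf_le_abs_sub_le hr ?_ ?_
  · rw [Real.sqrt_coe_toNNReal, Real.sqrt_coe_toNNReal, ← Real.sqrt_mul (by positivity)]
    refine Real.sqrt_le_sqrt (hvar.trans_eq ?_)
    field_simp
  · rw [abs_div_sub_eq hμ, div_le_iff₀ hμ] at hmean
    linarith [mul_le_mul_of_nonneg_right hγf_le (mul_pos hμ hft).le]

/-- Paper Theorem 8 (stronger smoothing guarantee when the variance of the
response counts is small), for the Gaussian approximations furnished by the
CLT. -/
theorem smoothing_better_small_count_variance (ft st μ : ℝ)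
    (hft : 0 < ft) (hst : 0 < st) (hμ : 0 < μ)
    (w : ℕ) (hw : 1 ≤ w)
    (n : ℤ → ℝ) (hn : ∀ i ∈ Finset.Icc (-(w : ℤ)) (w : ℤ), 0 < n i)
    (ntot : ℝ) (hntot : ntot = ∑ i ∈ Finset.Icc (-(w : ℤ)) (w : ℤ), n i)
    (γf γσ : ℝ) (hγf : 0 ≤ γf) (hγσ : 0 ≤ γσ)
    (mw vw : ℝ) (hvw0 : 0 ≤ vw)
    (hmean : |mw / μ - ft| ≤ γf * ft)
    (hvar : vw ≤ (1 / ntot) * (1 + γσ) * st)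
    (hratio : Real.sqrt ((n 0 / ntot) * (1 + γσ)) < 1) :
    ∀ lam : ℝ, γf / (1 - Real.sqrt ((n 0 / ntot) * (1 + γσ))) ≤ lam →
      gaussianReal mw vw.toNNReal {x : ℝ | |x / μ - ft| ≥ lam * ft} ≤
      gaussianReal (μ * ft) ((st / n 0).toNNReal)
        {x : ℝ | |x / μ - ft| ≥ lam * ft} :=
  smoothing_better_small_count_variance_general ft st μ hft hμ w n hn ntot hntot γf γσ hγσ mw vw
    hmean hvar hratio
end
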